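/- For every real number x with 0 ≤ x ≤ 5, the function m(x) = x·log(x) − x + 1 (with the convention m(0) = 1) satisfies m(x) ≥ (x − 1)²/4. -/
import Mathlib

open Real

/-- Padé lower bound for log on `[1, ∞)`. -/
lemma pade_log {x : ℝ} (hx : 1 ≤ x) : 2 * (x - 1) / (x + 1) ≤ Real.log x := by
  have hmono : MonotoneOn (fun y : ℝ => Real.log y - 2 * (y - 1) / (y + 1)) (Set.Ici 1) := by
    have hderiv : ∀ y : ℝ, 1 < y →
        HasDerivAt (fun y : ℝ => Real.log y - 2 * (y - 1) / (y + 1))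
          (1 / y - (2 * (y + 1) - 2 * (y - 1) * 1) / (y + 1) ^ 2) y := by
      intro y hy
      have h1 : HasDerivAt Real.log (1 / y) y := by
        simpa [one_div] using Real.hasDerivAt_log (by linarith : y ≠ 0)
      have h2 : HasDerivAt (fun y : ℝ => 2 * (y - 1)) 2 y := by
        simpa using ((hasDerivAt_id y).sub_const 1).const_mul (2 : ℝ)
      have h3 : HasDerivAt (fun y : ℝ => y + 1) 1 y := (hasDerivAt_id y).add_const 1
      exact h1.sub (h2.div h3 (by linarith))
    apply monotoneOn_of_deriv_nonneg (convex_Ici 1)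
    · apply ContinuousOn.sub
      · intro y hy
        exact (Real.continuousAt_log (by simp at hy; linarith)).continuousWithinAt
      · apply ContinuousOn.div
        · fun_prop
        · fun_prop
        · intro y hy; simp at hy; intro h; linarith
    · intro y hy
      rw [interior_Ici] at hy
      have hy' : 1 < y := Set.mem_Ioi.mp hy
      exact ((hderiv y hy').differentiableAt).differentiableWithinAt
    · intro y hy
      rw [interior_Ici] at hy
      have hy' : 1 < y := Set.mem_Ioi.mp hy
      rw [(hderiv y hy').deriv]
      have hy0 : (0:ℝ) < y := by linarith
      have hy1 : (0:ℝ) < (y + 1) ^ 2 := by positivity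
      rw [sub_nonneg, div_le_div_iff₀ hy1 hy0]
      nlinarith [sq_nonneg (y - 1)]
  have h := hmono (Set.mem_Ici.mpr le_rfl) (Set.mem_Ici.mpr hx) hx
  simp only [Real.log_one] at h
  linarith [h]

lemma log_three_ge : (17 : ℝ) / 16 ≤ Real.log 3 := by
  have h32 : Real.log 3 - Real.log 2 = Real.log (3 / 2) := (Real.log_div (by norm_num) (by norm_num)).symm
  have hp : 2 * ((3:ℝ)/2 - 1) / ((3:ℝ)/2 + 1) ≤ Real.log (3/2) := pade_log (by norm_num)
  have h2 := Real.log_two_gt_d9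
  norm_num at hp
  linarith

lemma log_five_ge : (8 : ℝ) / 5 ≤ Real.log 5 := by
  have h54 : Real.log 5 - Real.log 4 = Real.log (5 / 4) := (Real.log_div (by norm_num) (by norm_num)).symm
  have h4 : Real.log 4 = 2 * Real.log 2 := by
    rw [show (4:ℝ) = 2 ^ 2 by norm_num, Real.log_pow]; push_cast; ring
  have hp : 2 * ((5:ℝ)/4 - 1) / ((5:ℝ)/4 + 1) ≤ Real.log (5/4) := pade_log (by norm_num)
  have h2 := Real.log_two_gt_d9
  norm_num at hp
  linarith

theorem m_ge_quadratic (x : ℝ) (h0 : 0 ≤ x) (h5 : x ≤ 5) :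
    x * Real.log x - x + 1 ≥ (x - 1) ^ 2 / 4 := by
  rcases eq_or_lt_of_le h0 with h | hx
  · rw [← h]; norm_num
  rcases le_or_gt x 1 with h1 | h1
  · -- 0 < x ≤ 1 : use log x = 2 log √x ≥ 2 (1 - 1/√x)
    set s := Real.sqrt x with hs
    have hs0 : 0 < s := Real.sqrt_pos.mpr hx
    have hsx : s ^ 2 = x := Real.sq_sqrt h0
    have hs1 : s ≤ 1 := by
      rw [hs]; exact Real.sqrt_le_one.mpr h1
    have hlog : Real.log x = 2 * Real.log s := by
      rw [← hsx, Real.log_pow]; push_cast; ring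
    have hls : 1 - s⁻¹ ≤ Real.log s := Real.one_sub_inv_le_log_of_pos hs0
    have hinv : s * s⁻¹ = 1 := mul_inv_cancel₀ (ne_of_gt hs0)
    -- x * log x = 2 s^2 log s ≥ 2 s^2 (1 - 1/s) = 2 s^2 - 2 s
    have key : 2 * s ^ 2 - 2 * s ≤ x * Real.log x := by
      rw [hlog, ← hsx]
      have := mul_le_mul_of_nonneg_left hls (by positivity : (0:ℝ) ≤ 2 * s ^ 2)
      nlinarith [this, hinv]
    have heq : (x - 1) ^ 2 = (s ^ 2 - 1) ^ 2 := by rw [hsx]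
    rw [ge_iff_le]
    nlinarith [key, heq, hsx, mul_nonneg (mul_nonneg (sub_nonneg.mpr hs1) (sq_nonneg (s - 1)))
      (by linarith : (0:ℝ) ≤ s + 3)]
  rcases le_or_gt x 3 with h3 | h3
  · -- 1 ≤ x ≤ 3 : Padé
    have hp := pade_log h1.le
    have hxpos : (0:ℝ) < x + 1 := by linarith
    have hp' : 2 * (x - 1) ≤ Real.log x * (x + 1) := by
      rwa [div_le_iff₀ hxpos] at hp
    nlinarith [mul_le_mul_of_nonneg_left hp' h0, sq_nonneg (x - 1),
      mul_nonneg (sq_nonneg (x - 1)) (by linarith : (0:ℝ) ≤ 3 - x)]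
  rcases le_or_gt x 4 with h4 | h4
  · -- 3 ≤ x ≤ 4 : log x ≥ log 3 + 1 - 3/x
    have hx3 : Real.log x - Real.log 3 = Real.log (x / 3) := (Real.log_div (by linarith) (by norm_num)).symm
    have hl : 1 - (x / 3)⁻¹ ≤ Real.log (x / 3) :=
      Real.one_sub_inv_le_log_of_pos (by linarith)
    have hinv : (x / 3)⁻¹ = 3 / x := by
      rw [inv_div]
    rw [hinv] at hl
    have hxl : Real.log 3 + 1 - 3 / x ≤ Real.log x := by linarith
    have hdiv : x * (3 / x) = 3 := by field_simp
    have key : x * (Real.log 3 + 1 - 3 / x) ≤ x * Real.log x :=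
      mul_le_mul_of_nonneg_left hxl h0
    have hl3 := log_three_ge
    nlinarith [key, hdiv, mul_nonneg (by linarith : (0:ℝ) ≤ 4 - x) (by linarith : (0:ℝ) ≤ x - 9/4),
      mul_le_mul_of_nonneg_left hl3 h0]
  · -- 4 ≤ x ≤ 5 : log x ≥ log 5 + 1 - 5/x
    have hx5 : Real.log x - Real.log 5 = Real.log (x / 5) := (Real.log_div (by linarith) (by norm_num)).symm
    have hl : 1 - (x / 5)⁻¹ ≤ Real.log (x / 5) :=
      Real.one_sub_inv_le_log_of_pos (by linarith)
    have hinv : (x / 5)⁻¹ = 5 / x := by rw [inv_div]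
    rw [hinv] at hl
    have hxl : Real.log 5 + 1 - 5 / x ≤ Real.log x := by linarith
    have hdiv : x * (5 / x) = 5 := by field_simp
    have key : x * (Real.log 5 + 1 - 5 / x) ≤ x * Real.log x :=
      mul_le_mul_of_nonneg_left hxl h0
    have hl5 := log_five_ge
    nlinarith [key, hdiv, mul_nonneg (by linarith : (0:ℝ) ≤ 5 - x) (by linarith : (0:ℝ) ≤ x - 17/5),
      mul_le_mul_of_nonneg_left hl5 h0]
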